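/- Let G be a group and let H be a normal subgroup of G with H contained in the commutator subgroup [G,G]. Let S ⊆ H be a generating set for H that is contained in finitely many orbits of the conjugation action of G on H. Suppose there exists h ∈ H and ε > 0 such that cl(hⁿ) ≥ ε·n for infinitely many n (i.e., h has positive stable commutator length in G). Then the word norm on H with respect to S is unbounded; that is, for every C there exists an element of H that is not a product of C or fewer elements of S ∪ S⁻¹ (the Cayley graph of H with respect to S has infinite diameter). -/

import Mathlib

/-!
The products of `n` commutators form the pointwise power `commutatorSet G ^ n`, and
`commutatorSet G` is closed under inversion and conjugation. Every element of `S ∪ S⁻¹` is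
conjugate to some `t` or `t⁻¹` with `t` in the finite set `T ⊆ [G,G]`, so all of them are
products of a uniform number `K` of commutators, and a product of `m` of them is a product of
`K * m` commutators. Since `cl (h ^ n)` is unbounded, the word norms of the `h ^ n` are unbounded.
-/

open scoped commutatorElement in
/-- `g` is a product of `n` commutators in `G`. -/
def IsCommProd {G : Type*} [Group G] (n : ℕ) (g : G) : Prop :=
  ∃ a b : Fin n → G, g = (List.ofFn fun i => ⁅a i, b i⁆).prod

/-- The commutator length of `g`: the smallest `n` such that `g` is a product of
`n` commutators. -/
noncomputable def cl {G : Type*} [Group G] (g : G) : ℕ :=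
  sInf {n : ℕ | IsCommProd n g}

/-- `w` is a product of `n` elements of `S ∪ S⁻¹`. -/
def IsWordProd {G : Type*} [Group G] (S : Set G) (n : ℕ) (w : G) : Prop :=
  ∃ f : Fin n → G, (∀ i, f i ∈ S ∪ S⁻¹) ∧ w = (List.ofFn f).prod

/-- The word norm of `w` with respect to the generating set `S`: the smallest `n`
such that `w` is a product of `n` elements of `S ∪ S⁻¹`. -/
noncomputable def wordNorm {G : Type*} [Group G] (S : Set G) (w : G) : ℕ :=
  sInf {n : ℕ | IsWordProd S n w}

open scoped Pointwise commutatorElement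

theorem Set.mem_pow_iff_exists_ofFn {α : Type*} [Monoid α] {s : Set α} {n : ℕ} {a : α} :
    a ∈ s ^ n ↔ ∃ f : Fin n → α, (∀ i, f i ∈ s) ∧ a = (List.ofFn f).prod := by
  rw [Set.mem_pow]
  constructor
  · rintro ⟨f, rfl⟩
    exact ⟨fun i => f i, fun i => (f i).2, rfl⟩
  · rintro ⟨f, hf, rfl⟩
    exact ⟨fun i => ⟨f i, hf i⟩, rfl⟩

section

variable {G : Type*} [Group G]

theorem isWordProd_iff_mem_pow {S : Set G} {n : ℕ} {w : G} :
    IsWordProd S n w ↔ w ∈ (S ∪ S⁻¹) ^ n :=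
  Set.mem_pow_iff_exists_ofFn.symm

theorem isCommProd_iff_mem_pow {n : ℕ} {g : G} :
    IsCommProd n g ↔ g ∈ commutatorSet G ^ n := by
  rw [Set.mem_pow_iff_exists_ofFn]
  constructor
  · rintro ⟨a, b, rfl⟩
    exact ⟨_, fun i => commutator_mem_commutatorSet (a i) (b i), rfl⟩
  · rintro ⟨f, hf, rfl⟩
    choose a b hab using fun i => (mem_commutatorSet_iff ..).1 (hf i)
    exact ⟨a, b, by simp only [hab]⟩

theorem cl_le_of_mem_commutatorSet_pow {n : ℕ} {g : G} (hg : g ∈ commutatorSet G ^ n) :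
    cl g ≤ n :=
  Nat.sInf_le (isCommProd_iff_mem_pow.2 hg)

theorem inv_commutatorSet : (commutatorSet G)⁻¹ = commutatorSet G := by
  ext x
  rw [Set.mem_inv, mem_commutatorSet_iff, mem_commutatorSet_iff]
  constructor
  · rintro ⟨a, b, hab⟩
    exact ⟨b, a, by rw [← commutatorElement_inv, hab, inv_inv]⟩
  · rintro ⟨a, b, rfl⟩
    exact ⟨b, a, (commutatorElement_inv a b).symm⟩

theorem inv_commutatorSet_pow (n : ℕ) : (commutatorSet G ^ n)⁻¹ = commutatorSet G ^ n := by
  rw [← inv_pow, inv_commutatorSet]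

theorem image_commutatorSet_subset {G' : Type*} [Group G'] (f : G →* G') :
    f '' commutatorSet G ⊆ commutatorSet G' := by
  rintro _ ⟨_, ⟨a, b, rfl⟩, rfl⟩
  rw [map_commutatorElement]
  exact commutator_mem_commutatorSet _ _

theorem conj_mem_commutatorSet_pow {n : ℕ} {x : G} (g : G) (hx : x ∈ commutatorSet G ^ n) :
    g * x * g⁻¹ ∈ commutatorSet G ^ n := by
  have hmem : MulAut.conj g x ∈ (MulAut.conj g : G →* G) '' (commutatorSet G ^ n) :=
    Set.mem_image_of_mem _ hx
  rw [Set.image_pow] at hmem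
  exact Set.pow_subset_pow_left (image_commutatorSet_subset _) hmem

theorem exists_mem_commutatorSet_pow_of_mem_commutator {x : G} (hx : x ∈ commutator G) :
    ∃ n, x ∈ commutatorSet G ^ n := by
  rw [commutator_eq_closure] at hx
  induction hx using Subgroup.closure_induction with
  | mem y hy => exact ⟨1, by rwa [pow_one]⟩
  | one => exact ⟨0, rfl⟩
  | mul a b _ _ ha hb =>
    obtain ⟨m, hm⟩ := ha
    obtain ⟨n, hn⟩ := hb
    exact ⟨m + n, by rw [pow_add]; exact Set.mul_mem_mul hm hn⟩
  | inv a _ ha =>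
    obtain ⟨n, hn⟩ := ha
    exact ⟨n, by rwa [← Set.mem_inv, inv_commutatorSet_pow]⟩

theorem exists_subset_commutatorSet_pow_of_finite_orbits {S : Set G} (T : Finset G)
    (hT : (T : Set G) ⊆ commutator G) (horb : ∀ s ∈ S, ∃ g : G, ∃ t ∈ T, s = g * t * g⁻¹) :
    ∃ K, S ∪ S⁻¹ ⊆ commutatorSet G ^ K := by
  choose! N hN using fun t (ht : t ∈ T) => exists_mem_commutatorSet_pow_of_mem_commutator (hT ht)
  have hS : S ⊆ commutatorSet G ^ T.sup N := by
    intro s hs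
    obtain ⟨g, t, ht, rfl⟩ := horb s hs
    exact conj_mem_commutatorSet_pow g <|
      Set.pow_subset_pow_right (one_mem_commutatorSet G) (Finset.le_sup ht) (hN t ht)
  refine ⟨T.sup N, Set.union_subset hS ?_⟩
  rw [← inv_commutatorSet_pow]
  exact Set.inv_subset_inv.2 hS

theorem cl_le_mul_of_isWordProd {S : Set G} {K m : ℕ} {w : G}
    (hS : S ∪ S⁻¹ ⊆ commutatorSet G ^ K) (hw : IsWordProd S m w) : cl w ≤ K * m :=
  cl_le_of_mem_commutatorSet_pow <|
    pow_mul (commutatorSet G) K m ▸ Set.pow_subset_pow_left hS (isWordProd_iff_mem_pow.1 hw)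

theorem exists_lt_cl_pow {g : G} {ε : ℝ} (hε : 0 < ε)
    (hscl : ∀ N : ℕ, ∃ n ≥ N, ε * n ≤ (cl (g ^ n) : ℝ)) (B : ℕ) : ∃ n, B < cl (g ^ n) := by
  obtain ⟨N, hN⟩ := exists_nat_gt (B / ε)
  obtain ⟨n, hnN, hcl⟩ := hscl N
  refine ⟨n, Nat.cast_lt.1 (lt_of_lt_of_le ?_ hcl)⟩
  calc (B : ℝ) = ε * (B / ε) := (mul_div_cancel₀ _ hε.ne').symm
    _ < ε * n := mul_lt_mul_of_pos_left (hN.trans_le (Nat.cast_le.2 hnN)) hε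

end

theorem wordNorm_unbounded_of_positive_scl_general {G : Type*} [Group G] (H : Subgroup G)
    (hHcomm : H ≤ commutator G) (S : Set G) (hSH : S ⊆ (H : Set G))
    (T : Finset G) (hTS : (T : Set G) ⊆ S)
    (horb : ∀ s ∈ S, ∃ g : G, ∃ t ∈ T, s = g * t * g⁻¹)
    (h : G) (hh : h ∈ H) (ε : ℝ) (hε : 0 < ε)
    (hscl : ∀ N : ℕ, ∃ n ≥ N, ε * n ≤ (cl (h ^ n) : ℝ)) :
    ∀ C : ℕ, ∃ w ∈ H, ∀ n ≤ C, ¬ IsWordProd S n w := by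
  intro C
  obtain ⟨K, hK⟩ := exists_subset_commutatorSet_pow_of_finite_orbits T
    (hTS.trans (hSH.trans hHcomm)) horb
  obtain ⟨n, hn⟩ := exists_lt_cl_pow hε hscl (K * C)
  refine ⟨h ^ n, H.pow_mem hh n, fun m hm hw => ?_⟩
  have hcl : cl (h ^ n) ≤ K * m := cl_le_mul_of_isWordProd hK hw
  have : K * m ≤ K * C := Nat.mul_le_mul_left K hm
  omega

/-- If `H ⊴ G` lies in `[G,G]`, `S` generates `H` and lies in finitely many
`G`-conjugacy orbits, and some `h ∈ H` has positive stable commutator length in `G`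
(i.e. `cl (h ^ n) ≥ ε * n` for infinitely many `n`), then the word norm on `H` with
respect to `S` is unbounded: for every `C` there is an element of `H` that is not a
product of `C` or fewer elements of `S ∪ S⁻¹`. -/
theorem wordNorm_unbounded_of_positive_scl {G : Type*} [Group G] (H : Subgroup G)
    [H.Normal] (hHcomm : H ≤ commutator G) (S : Set G) (hSH : S ⊆ (H : Set G))
    (hSgen : Subgroup.closure S = H)
    (T : Finset G) (hTS : (T : Set G) ⊆ S)
    (horb : ∀ s ∈ S, ∃ g : G, ∃ t ∈ T, s = g * t * g⁻¹)
    (h : G) (hh : h ∈ H) (ε : ℝ) (hε : 0 < ε)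
    (hscl : ∀ N : ℕ, ∃ n ≥ N, ε * n ≤ (cl (h ^ n) : ℝ)) :
    ∀ C : ℕ, ∃ w ∈ H, ∀ n ≤ C, ¬ IsWordProd S n w :=
  wordNorm_unbounded_of_positive_scl_general H hHcomm S hSH T hTS horb h hh ε hε hscl
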